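/- arXiv:2602.14503 — 5 statements merged into one kernel-verified Lean document; each statement's English description precedes it below -/
import Mathlib

section
/- Theorem 1 (validity of bounds with non-descendant covariates): let P be a counterfactual joint distribution on Ω and let k ≤ n. The set S(P) is a nonempty compact subset of the probability simplex on Ω, hence the objective Q ↦ Q({(r,z,t) : r s = s for all s < k}) attains a minimum value LB and a maximum value UB on S(P); moreover LB ≤ PNS(k) ≤ UB, where PNS(k) := P({(r,z,t) : r s = s for all s < k}). -/
/-- The probability of an event `E` under a mass function `P` on a finite type. -/
noncomputable def prob {Ω : Type*} [Fintype Ω] (P : Ω → ℝ) (E : Set Ω) : ℝ :=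
  ∑ ω, E.indicator P ω

/-- The probability simplex: nonnegative functions summing to one. -/
def simplexSet (Ω : Type*) [Fintype Ω] : Set (Ω → ℝ) :=
  {Q | (∀ ω, 0 ≤ Q ω) ∧ ∑ ω, Q ω = 1}

/-- The counterfactual sample space: potential outcomes `r : Fin n → Fin n`
(`r s` is `Y_{x_s}`), covariates `z : Π i, Z i`, and treatment `t : Fin n`. -/
abbrev CfOmega (n m : ℕ) (Z : Fin m → Type) [∀ i, Fintype (Z i)] : Type :=
  (Fin n → Fin n) × ((i : Fin m) → Z i) × Fin n

/-- The Theorem 1 feasible set `S(P)`: mass functions matching the experimental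
constraints `Q(Y_{x_t} = s, Z_I = z_I) = P(Y_{x_t} = s, Z_I = z_I)` and the observational
constraints `Q(X = t, Y_{x_t} = s, Z_I = z_I) = P(X = t, Y_{x_t} = s, Z_I = z_I)`
for every subset `I` of covariate indices. -/
def feasibleSet (n m : ℕ) (Z : Fin m → Type) [∀ i, Fintype (Z i)]
    (P : CfOmega n m Z → ℝ) : Set (CfOmega n m Z → ℝ) :=
  {Q | Q ∈ simplexSet (CfOmega n m Z) ∧
    ∀ (s t : Fin n) (I : Finset (Fin m)) (zv : (i : Fin m) → Z i),
      (prob Q {ω | ω.1 t = s ∧ ∀ i ∈ I, ω.2.1 i = zv i} =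
        prob P {ω | ω.1 t = s ∧ ∀ i ∈ I, ω.2.1 i = zv i}) ∧
      (prob Q {ω | ω.2.2 = t ∧ ω.1 t = s ∧ ∀ i ∈ I, ω.2.1 i = zv i} =
        prob P {ω | ω.2.2 = t ∧ ω.1 t = s ∧ ∀ i ∈ I, ω.2.1 i = zv i})}

/-- The PNS(k) event `{(r,z,t) : r s = s for all s < k}` (after relabeling of outcomes). -/
def pnsEvent (n m : ℕ) (Z : Fin m → Type) [∀ i, Fintype (Z i)] (k : ℕ) :
    Set (CfOmega n m Z) :=
  {ω | ∀ s : Fin n, (s : ℕ) < k → ω.1 s = s}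

/-! `P` itself satisfies all the constraints, so `S(P)` is nonempty; it is cut out of the compact
simplex by equations that are linear, hence continuous, in `Q`, so it is compact, and the
continuous objective attains its extrema on it. Both extrema bracket the value at `P`. -/

theorem IsCompact.exists_isLeast_isGreatest_image_of_mem {X α : Type*} [TopologicalSpace X]
    [ConditionallyCompleteLinearOrder α] [TopologicalSpace α] [OrderTopology α]
    {s : Set X} (hs : IsCompact s) {f : X → α} (hf : ContinuousOn f s) {a : X} (ha : a ∈ s) :
    ∃ lb ub, IsLeast (f '' s) lb ∧ IsGreatest (f '' s) ub ∧ lb ≤ f a ∧ f a ≤ ub := by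
  have hfs : (f '' s).Nonempty := ⟨f a, Set.mem_image_of_mem f ha⟩
  obtain ⟨lb, hlb⟩ := (hs.image_of_continuousOn hf).exists_isLeast hfs
  obtain ⟨ub, hub⟩ := (hs.image_of_continuousOn hf).exists_isGreatest hfs
  exact ⟨lb, ub, hlb, hub, hlb.2 (Set.mem_image_of_mem f ha), hub.2 (Set.mem_image_of_mem f ha)⟩

theorem continuous_prob {Ω : Type*} [Fintype Ω] (E : Set Ω) :
    Continuous fun Q : Ω → ℝ => prob Q E := by
  classical
  simp only [prob, Set.indicator_apply]
  exact continuous_finsetSum _ fun ω _ => (continuous_apply ω).if_const _ continuous_const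

section FeasibleSet

variable {n m : ℕ} {Z : Fin m → Type} [∀ i, Fintype (Z i)] {P : CfOmega n m Z → ℝ}

theorem self_mem_feasibleSet (hP : P ∈ simplexSet (CfOmega n m Z)) :
    P ∈ feasibleSet n m Z P :=
  ⟨hP, fun _ _ _ _ => ⟨rfl, rfl⟩⟩

theorem feasibleSet_subset_simplexSet : feasibleSet n m Z P ⊆ simplexSet (CfOmega n m Z) :=
  fun _ hQ => hQ.1

theorem isClosed_feasibleSet : IsClosed (feasibleSet n m Z P) := by
  simp only [feasibleSet, Set.ofPred_and, Set.ofPred_forall, Set.ofPred_mem_eq]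
  refine (isClosed_stdSimplex ℝ _).inter <| isClosed_iInter fun s => isClosed_iInter fun t =>
    isClosed_iInter fun I => isClosed_iInter fun zv => ?_
  exact (isClosed_eq (continuous_prob _) continuous_const).inter
    (isClosed_eq (continuous_prob _) continuous_const)

theorem isCompact_feasibleSet : IsCompact (feasibleSet n m Z P) :=
  (isCompact_stdSimplex ℝ _).of_isClosed_subset isClosed_feasibleSet
    feasibleSet_subset_simplexSet

end FeasibleSet

theorem theorem1_valid_bounds_general
    (n m : ℕ) (Z : Fin m → Type) [∀ i, Fintype (Z i)]
    (P : CfOmega n m Z → ℝ) (hP : P ∈ simplexSet (CfOmega n m Z))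
    (k : ℕ) :
    (feasibleSet n m Z P).Nonempty ∧
    IsCompact (feasibleSet n m Z P) ∧
    feasibleSet n m Z P ⊆ simplexSet (CfOmega n m Z) ∧
    ∃ LB UB : ℝ,
      IsLeast ((fun Q => prob Q (pnsEvent n m Z k)) '' feasibleSet n m Z P) LB ∧
      IsGreatest ((fun Q => prob Q (pnsEvent n m Z k)) '' feasibleSet n m Z P) UB ∧
      LB ≤ prob P (pnsEvent n m Z k) ∧ prob P (pnsEvent n m Z k) ≤ UB :=
  ⟨⟨P, self_mem_feasibleSet hP⟩, isCompact_feasibleSet, feasibleSet_subset_simplexSet,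
    isCompact_feasibleSet.exists_isLeast_isGreatest_image_of_mem
      (continuous_prob _).continuousOn (self_mem_feasibleSet hP)⟩

/-- Theorem 1 (validity of bounds with non-descendant covariates): `S(P)` is a nonempty
compact subset of the probability simplex, the objective `Q ↦ Q(PNS(k)-event)` attains a
minimum `LB` and a maximum `UB` on `S(P)`, and `LB ≤ PNS(k) ≤ UB`. -/
theorem theorem1_valid_bounds
    (n m : ℕ) (Z : Fin m → Type) [∀ i, Fintype (Z i)] [∀ i, Nonempty (Z i)]
    (P : CfOmega n m Z → ℝ) (hP : P ∈ simplexSet (CfOmega n m Z))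
    (k : ℕ) (hk : k ≤ n) :
    (feasibleSet n m Z P).Nonempty ∧
    IsCompact (feasibleSet n m Z P) ∧
    feasibleSet n m Z P ⊆ simplexSet (CfOmega n m Z) ∧
    ∃ LB UB : ℝ,
      IsLeast ((fun Q => prob Q (pnsEvent n m Z k)) '' feasibleSet n m Z P) LB ∧
      IsGreatest ((fun Q => prob Q (pnsEvent n m Z k)) '' feasibleSet n m Z P) UB ∧
      LB ≤ prob P (pnsEvent n m Z k) ∧ prob P (pnsEvent n m Z k) ≤ UB :=
  theorem1_valid_bounds_general n m Z P hP k
end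

section
/- Tian–Pearl upper bound on PNS: for every P as in the context, P(Y₁ = true ∧ Y₀ = false) ≤ min {P(Y₁ = true), P(Y₀ = false), P(X = true ∧ Y = true) + P(X = false ∧ Y = false), P(Y₁ = true) − P(Y₀ = true) + P(X = true ∧ Y = false) + P(X = false ∧ Y = true)}. -/
/-- The binary counterfactual sample space: coordinates `(Y₀, Y₁, X)`, i.e. the potential
outcomes `Y₀ = Y_{x'}` and `Y₁ = Y_x` and the treatment `X`. -/
abbrev BOmega : Type := Bool × Bool × Bool

/-- The observed outcome defined by consistency: `Y := if X then Y₁ else Y₀`. -/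
def Yobs (ω : BOmega) : Bool := if ω.2.2 then ω.2.1 else ω.1

section Prob

variable {Ω : Type*} [Fintype Ω] {P : Ω → ℝ}

theorem prob_mono (hP : ∀ ω, 0 ≤ P ω) {E F : Set Ω} (h : E ⊆ F) : prob P E ≤ prob P F :=
  Finset.sum_le_sum fun ω _ => Set.indicator_le_indicator_of_subset h hP ω

theorem prob_union_le (hP : ∀ ω, 0 ≤ P ω) (E F : Set Ω) :
    prob P (E ∪ F) ≤ prob P E + prob P F := by
  rw [prob, prob, prob, ← Finset.sum_add_distrib]
  gcongr with ω
  rw [← Set.indicator_union_add_inter_apply]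
  exact le_add_of_nonneg_right (Set.indicator_nonneg (fun ω _ => hP ω) ω)

theorem prob_le_add_of_subset_union (hP : ∀ ω, 0 ≤ P ω) {E F G : Set Ω} (h : E ⊆ F ∪ G) :
    prob P E ≤ prob P F + prob P G :=
  (prob_mono hP h).trans (prob_union_le hP F G)

variable (P)

theorem prob_inter_add_prob_sdiff (E F : Set Ω) :
    prob P (E ∩ F) + prob P (E \ F) = prob P E := by
  rw [prob, prob, prob, ← Finset.sum_add_distrib]
  simp only [← Set.indicator_union_of_disjoint Set.disjoint_sdiff_inter.symm,
    Set.inter_union_sdiff]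

theorem prob_sub_prob (E F : Set Ω) :
    prob P E - prob P F = prob P (E \ F) - prob P (F \ E) := by
  rw [← prob_inter_add_prob_sdiff P E F, ← prob_inter_add_prob_sdiff P F E, Set.inter_comm]
  ring

end Prob

theorem pns_subset_treatment_eq_outcome :
    {ω : BOmega | ω.2.1 = true ∧ ω.1 = false} ⊆
      {ω | ω.2.2 = true ∧ Yobs ω = true} ∪ {ω | ω.2.2 = false ∧ Yobs ω = false} := by
  rintro ⟨y₀, y₁, x⟩ ⟨h₁, h₀⟩
  cases x <;> simp_all [Yobs]

theorem harm_subset_treatment_ne_outcome :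
    {ω : BOmega | ω.1 = true ∧ ω.2.1 = false} ⊆
      {ω | ω.2.2 = true ∧ Yobs ω = false} ∪ {ω | ω.2.2 = false ∧ Yobs ω = true} := by
  rintro ⟨y₀, y₁, x⟩ ⟨h₀, h₁⟩
  cases x <;> simp_all [Yobs]

theorem prob_Y₁_sub_prob_Y₀ (P : BOmega → ℝ) :
    prob P {ω | ω.2.1 = true} - prob P {ω | ω.1 = true} =
      prob P {ω | ω.2.1 = true ∧ ω.1 = false} - prob P {ω | ω.1 = true ∧ ω.2.1 = false} := by
  convert prob_sub_prob P {ω : BOmega | ω.2.1 = true} {ω | ω.1 = true} using 3 <;> ext <;> simp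

theorem tian_pearl_pns_upper_bound_general
    (P : BOmega → ℝ) (hP0 : ∀ ω, 0 ≤ P ω) :
    prob P {ω | ω.2.1 = true ∧ ω.1 = false} ≤
      min (prob P {ω | ω.2.1 = true}) (min
        (prob P {ω | ω.1 = false})
        (min
          (prob P {ω | ω.2.2 = true ∧ Yobs ω = true} +
            prob P {ω | ω.2.2 = false ∧ Yobs ω = false})
          (prob P {ω | ω.2.1 = true} - prob P {ω | ω.1 = true} +
            prob P {ω | ω.2.2 = true ∧ Yobs ω = false} +
            prob P {ω | ω.2.2 = false ∧ Yobs ω = true}))) := by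
  have harm := prob_le_add_of_subset_union hP0 harm_subset_treatment_ne_outcome
  refine le_min (prob_mono hP0 fun _ h => h.1) (le_min (prob_mono hP0 fun _ h => h.2)
    (le_min (prob_le_add_of_subset_union hP0 pns_subset_treatment_eq_outcome) ?_))
  linarith [prob_Y₁_sub_prob_Y₀ P]

/-- Tian–Pearl upper bound on PNS: `PNS ≤ min {P(y_x), P(y'_{x'}),
P(x,y) + P(x',y'), P(y_x) − P(y_{x'}) + P(x,y') + P(x',y)}`. -/
theorem tian_pearl_pns_upper_bound
    (P : BOmega → ℝ) (hP0 : ∀ ω, 0 ≤ P ω) (hP1 : ∑ ω, P ω = 1) :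
    prob P {ω | ω.2.1 = true ∧ ω.1 = false} ≤
      min (prob P {ω | ω.2.1 = true}) (min
        (prob P {ω | ω.1 = false})
        (min
          (prob P {ω | ω.2.2 = true ∧ Yobs ω = true} +
            prob P {ω | ω.2.2 = false ∧ Yobs ω = false})
          (prob P {ω | ω.2.1 = true} - prob P {ω | ω.1 = true} +
            prob P {ω | ω.2.2 = true ∧ Yobs ω = false} +
            prob P {ω | ω.2.2 = false ∧ Yobs ω = true}))) :=
  tian_pearl_pns_upper_bound_general P hP0
end

section
/- Lower bound on PS (by exchanging x with x' and y with y' in the PN bound): for every P as in the context, P(Y₁ = true ∧ X = false ∧ Y = false) ≥ P(Y₁ = true) − P(Y = true); consequently, if P(X = false ∧ Y = false) > 0 then PS ≥ max {0, (P(Y₁ = true) − P(Y = true)) / P(X = false ∧ Y = false)}. -/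
/-!
If `Y₁` holds then either `X` holds, and then `Y = Y₁` holds by consistency, or `X` fails; so
`{Y₁} ⊆ {Y} ∪ {Y₁, X', Y'}`, and subadditivity gives `P(Y₁) ≤ P(Y) + P(Y₁, X', Y')`.
The bound on PS follows by dividing by `P(X', Y') > 0` and noting that PS is nonnegative.
-/

section Prob

variable {Ω : Type*} [Fintype Ω] {P : Ω → ℝ}

theorem prob_nonneg (hP : ∀ ω, 0 ≤ P ω) (E : Set Ω) : 0 ≤ prob P E :=
  Finset.sum_nonneg fun ω _ => Set.indicator_nonneg (fun ω _ => hP ω) ω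

end Prob

theorem setOf_Y₁_subset_union :
    {ω : BOmega | ω.2.1 = true} ⊆
      {ω | Yobs ω = true} ∪ {ω | ω.2.1 = true ∧ ω.2.2 = false ∧ Yobs ω = false} := by
  rintro ⟨y₀, y₁, x⟩ hy₁
  cases x <;> cases y₀ <;> simp_all [Yobs]

theorem ps_lower_bound_general
    (P : BOmega → ℝ) (hP0 : ∀ ω, 0 ≤ P ω) :
    (prob P {ω | ω.2.1 = true} - prob P {ω | Yobs ω = true} ≤
      prob P {ω | ω.2.1 = true ∧ ω.2.2 = false ∧ Yobs ω = false}) ∧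
    (0 < prob P {ω | ω.2.2 = false ∧ Yobs ω = false} →
      max 0 ((prob P {ω | ω.2.1 = true} - prob P {ω | Yobs ω = true}) /
          prob P {ω | ω.2.2 = false ∧ Yobs ω = false}) ≤
        prob P {ω | ω.2.1 = true ∧ ω.2.2 = false ∧ Yobs ω = false} /
          prob P {ω | ω.2.2 = false ∧ Yobs ω = false}) := by
  have hnum := sub_le_iff_le_add'.mpr (prob_le_add_of_subset_union hP0 setOf_Y₁_subset_union)
  refine ⟨hnum, fun hden => max_le ?_ (div_le_div_of_nonneg_right hnum hden.le)⟩
  exact div_nonneg (prob_nonneg hP0 _) hden.le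

/-- Lower bound on PS: `P(y_x, x', y') ≥ P(y_x) − P(y)`; consequently, if
`P(x', y') > 0` then `PS ≥ max {0, (P(y_x) − P(y)) / P(x', y')}`. -/
theorem ps_lower_bound
    (P : BOmega → ℝ) (hP0 : ∀ ω, 0 ≤ P ω) (hP1 : ∑ ω, P ω = 1) :
    (prob P {ω | ω.2.1 = true} - prob P {ω | Yobs ω = true} ≤
      prob P {ω | ω.2.1 = true ∧ ω.2.2 = false ∧ Yobs ω = false}) ∧
    (0 < prob P {ω | ω.2.2 = false ∧ Yobs ω = false} →
      max 0 ((prob P {ω | ω.2.1 = true} - prob P {ω | Yobs ω = true}) /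
          prob P {ω | ω.2.2 = false ∧ Yobs ω = false}) ≤
        prob P {ω | ω.2.1 = true ∧ ω.2.2 = false ∧ Yobs ω = false} /
          prob P {ω | ω.2.2 = false ∧ Yobs ω = false}) :=
  ps_lower_bound_general P hP0
end

section
/- Sharpness of the Tian–Pearl lower bound (subsumed by the framework in the binary case with no covariates): for every P as in the context, the infimum over Q ∈ S(P) of Q(Y₁ = true ∧ Y₀ = false) is attained and equals max {0, P(Y₁ = true) − P(Y₀ = true), P(Y = true) − P(Y₀ = true), P(Y₁ = true) − P(Y = true)}. -/
/-- The binary no-covariate feasible set `S(P)`: mass functions `Q` matching the marginals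
`Q(Y₁ = true) = P(Y₁ = true)`, `Q(Y₀ = true) = P(Y₀ = true)` and the observational joint
`Q(X = a, Y = b) = P(X = a, Y = b)` for all `a b : Bool`. -/
def binFeasible (P : BOmega → ℝ) : Set (BOmega → ℝ) :=
  {Q | (∀ ω, 0 ≤ Q ω) ∧ (∑ ω, Q ω = 1) ∧
    prob Q {ω | ω.2.1 = true} = prob P {ω | ω.2.1 = true} ∧
    prob Q {ω | ω.1 = true} = prob P {ω | ω.1 = true} ∧
    ∀ a b : Bool, prob Q {ω | ω.2.2 = a ∧ Yobs ω = b} = prob P {ω | ω.2.2 = a ∧ Yobs ω = b}}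

noncomputable def Qmin (P : BOmega → ℝ) : BOmega → ℝ := fun ω =>
  let q11 := P (false,true,true) + P (true,true,true)
  let q10 := P (false,false,true) + P (true,false,true)
  let q01 := P (true,false,false) + P (true,true,false)
  let q00 := P (false,false,false) + P (false,true,false)
  let s := P (false,true,false) + P (true,true,false)
  let t := P (true,false,true) + P (true,true,true)
  let a := min q11 t
  let d := max 0 (s - q01)
  match ω with
  | (true,true,true) => a
  | (false,true,true) => q11 - a
  | (true,false,true) => t - a
  | (false,false,true) => q10 - (t - a)
  | (true,true,false) => s - d
  | (true,false,false) => q01 - (s - d)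
  | (false,true,false) => d
  | (false,false,false) => q00 - d

/-- Sharpness of the Tian–Pearl lower bound: the infimum over `Q ∈ S(P)` of
`Q(Y₁ = true ∧ Y₀ = false)` is attained and equals
`max {0, P(y_x) − P(y_{x'}), P(y) − P(y_{x'}), P(y_x) − P(y)}`. -/
theorem tian_pearl_lower_bound_sharp
    (P : BOmega → ℝ) (hP0 : ∀ ω, 0 ≤ P ω) (hP1 : ∑ ω, P ω = 1) :
    IsLeast ((fun Q => prob Q {ω | ω.2.1 = true ∧ ω.1 = false}) '' binFeasible P)
      (max 0 (max
        (prob P {ω | ω.2.1 = true} - prob P {ω | ω.1 = true})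
        (max
          (prob P {ω | Yobs ω = true} - prob P {ω | ω.1 = true})
          (prob P {ω | ω.2.1 = true} - prob P {ω | Yobs ω = true})))) := by
  have h000 := hP0 (false,false,false); have h010 := hP0 (false,true,false)
  have h100 := hP0 (true,false,false); have h110 := hP0 (true,true,false)
  have h001 := hP0 (false,false,true); have h011 := hP0 (false,true,true)
  have h101 := hP0 (true,false,true); have h111 := hP0 (true,true,true)
  have e1 : prob P {ω | ω.2.1 = true} = P (false,true,false) + P (false,true,true) +
      P (true,true,false) + P (true,true,true) := by
    simp [prob, Set.indicator, Fintype.sum_prod_type]; ring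
  have e0 : prob P {ω | ω.1 = true} = P (true,false,false) + P (true,false,true) +
      P (true,true,false) + P (true,true,true) := by
    simp [prob, Set.indicator, Fintype.sum_prod_type]; ring
  have ey : prob P {ω | Yobs ω = true} = P (true,false,false) + P (true,true,false) +
      P (false,true,true) + P (true,true,true) := by
    simp [prob, Set.indicator, Fintype.sum_prod_type, Yobs]; ring
  have hP1' : P (false,false,false) + P (false,true,false) + P (true,false,false) +
      P (true,true,false) + P (false,false,true) + P (false,true,true) +
      P (true,false,true) + P (true,true,true) = 1 := by
    rw [← hP1]; simp [Fintype.sum_prod_type]; ring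
  constructor
  · refine ⟨Qmin P, ⟨?_, ?_, ?_, ?_, ?_⟩, ?_⟩
    · rintro ⟨y0, y1, x⟩
      cases y0 <;> cases y1 <;> cases x <;>
        simp only [Qmin, min_def, max_def] <;> split_ifs <;> linarith
    · simp only [Fintype.sum_prod_type, Fintype.sum_bool, Qmin]; linarith [hP1']
    · rw [e1]; simp [prob, Set.indicator, Fintype.sum_prod_type, Qmin]; ring
    · rw [e0]; simp [prob, Set.indicator, Fintype.sum_prod_type, Qmin]; ring
    · intro a b
      cases a <;> cases b <;>
        (simp [prob, Set.indicator, Fintype.sum_prod_type, Yobs, Qmin]; ring)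
    · have eL : prob (Qmin P) {ω | ω.2.1 = true ∧ ω.1 = false} =
          max 0 (P (false,true,true) - P (true,false,true)) +
          max 0 (P (false,true,false) - P (true,false,false)) := by
        simp [prob, Set.indicator, Fintype.sum_prod_type, Qmin]
        simp only [min_def, max_def]; split_ifs <;> linarith
      show prob (Qmin P) {ω | ω.2.1 = true ∧ ω.1 = false} = _
      rw [eL, e1, e0, ey]
      simp only [max_def]; split_ifs <;> linarith
  · rintro r ⟨Q, ⟨hQ0, hQ1, h1, h0, hobs⟩, rfl⟩
    have g000 := hQ0 (false,false,false); have g010 := hQ0 (false,true,false)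
    have g100 := hQ0 (true,false,false); have g110 := hQ0 (true,true,false)
    have g001 := hQ0 (false,false,true); have g011 := hQ0 (false,true,true)
    have g101 := hQ0 (true,false,true); have g111 := hQ0 (true,true,true)
    have htt := hobs true true
    have hft := hobs false true
    have c1 : ∀ R : BOmega → ℝ, prob R {ω | ω.2.1 = true} = R (false,true,false) +
        R (false,true,true) + R (true,true,false) + R (true,true,true) := by
      intro R; simp [prob, Set.indicator, Fintype.sum_prod_type]; ring
    have c0 : ∀ R : BOmega → ℝ, prob R {ω | ω.1 = true} = R (true,false,false) +
        R (true,false,true) + R (true,true,false) + R (true,true,true) := by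
      intro R; simp [prob, Set.indicator, Fintype.sum_prod_type]; ring
    have ctt : ∀ R : BOmega → ℝ, prob R {ω | ω.2.2 = true ∧ Yobs ω = true} =
        R (false,true,true) + R (true,true,true) := by
      intro R; simp [prob, Set.indicator, Fintype.sum_prod_type, Yobs]; ring
    have cft : ∀ R : BOmega → ℝ, prob R {ω | ω.2.2 = false ∧ Yobs ω = true} =
        R (true,false,false) + R (true,true,false) := by
      intro R; simp [prob, Set.indicator, Fintype.sum_prod_type, Yobs]; ring
    have cL : prob Q {ω | ω.2.1 = true ∧ ω.1 = false} =
        Q (false,true,false) + Q (false,true,true) := by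
      simp [prob, Set.indicator, Fintype.sum_prod_type]; ring
    rw [c1 Q, c1 P] at h1
    rw [c0 Q, c0 P] at h0
    rw [ctt Q, ctt P] at htt
    rw [cft Q, cft P] at hft
    show _ ≤ prob Q {ω | ω.2.1 = true ∧ ω.1 = false}
    rw [cL, e1, e0, ey]
    refine max_le ?_ (max_le ?_ (max_le ?_ ?_)) <;> linarith
end

section
/- Sharpness of the Tian–Pearl upper bound (subsumed by the framework in the binary case with no covariates): for every P as in the context, the supremum over Q ∈ S(P) of Q(Y₁ = true ∧ Y₀ = false) is attained and equals min {P(Y₁ = true), P(Y₀ = false), P(X = true ∧ Y = true) + P(X = false ∧ Y = false), P(Y₁ = true) − P(Y₀ = true) + P(X = true ∧ Y = false) + P(X = false ∧ Y = true)}. -/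
/-- Sharpness of the Tian–Pearl upper bound: the supremum over `Q ∈ S(P)` of
`Q(Y₁ = true ∧ Y₀ = false)` is attained and equals `min {P(y_x), P(y'_{x'}),
P(x,y) + P(x',y'), P(y_x) − P(y_{x'}) + P(x,y') + P(x',y)}`. -/
theorem tian_pearl_upper_bound_sharp
    (P : BOmega → ℝ) (hP0 : ∀ ω, 0 ≤ P ω) (hP1 : ∑ ω, P ω = 1) :
    IsGreatest ((fun Q => prob Q {ω | ω.2.1 = true ∧ ω.1 = false}) '' binFeasible P)
      (min (prob P {ω | ω.2.1 = true}) (min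
        (prob P {ω | ω.1 = false})
        (min
          (prob P {ω | ω.2.2 = true ∧ Yobs ω = true} +
            prob P {ω | ω.2.2 = false ∧ Yobs ω = false})
          (prob P {ω | ω.2.1 = true} - prob P {ω | ω.1 = true} +
            prob P {ω | ω.2.2 = true ∧ Yobs ω = false} +
            prob P {ω | ω.2.2 = false ∧ Yobs ω = true})))) := by
  simp only [Fintype.sum_prod_type, Fintype.sum_bool] at hP1
  -- expansions of the P-probabilities
  have e1 : prob P {ω | ω.2.1 = true} =
      P (false,true,false) + P (false,true,true) + P (true,true,false) + P (true,true,true) := by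
    simp [prob, Set.indicator_apply, Fintype.sum_prod_type, Fintype.sum_bool]; ring
  have e2 : prob P {ω | ω.1 = false} =
      P (false,false,false) + P (false,false,true) + P (false,true,false) + P (false,true,true) := by
    simp [prob, Set.indicator_apply, Fintype.sum_prod_type, Fintype.sum_bool]; ring
  have e3 : prob P {ω | ω.1 = true} =
      P (true,false,false) + P (true,false,true) + P (true,true,false) + P (true,true,true) := by
    simp [prob, Set.indicator_apply, Fintype.sum_prod_type, Fintype.sum_bool]; ring
  have e4 : prob P {ω | ω.2.2 = true ∧ Yobs ω = true} =
      P (false,true,true) + P (true,true,true) := by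
    simp [prob, Set.indicator_apply, Fintype.sum_prod_type, Fintype.sum_bool, Yobs]; ring
  have e5 : prob P {ω | ω.2.2 = true ∧ Yobs ω = false} =
      P (false,false,true) + P (true,false,true) := by
    simp [prob, Set.indicator_apply, Fintype.sum_prod_type, Fintype.sum_bool, Yobs]; ring
  have e6 : prob P {ω | ω.2.2 = false ∧ Yobs ω = true} =
      P (true,false,false) + P (true,true,false) := by
    simp [prob, Set.indicator_apply, Fintype.sum_prod_type, Fintype.sum_bool, Yobs]; ring
  have e7 : prob P {ω | ω.2.2 = false ∧ Yobs ω = false} =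
      P (false,false,false) + P (false,true,false) := by
    simp [prob, Set.indicator_apply, Fintype.sum_prod_type, Fintype.sum_bool, Yobs]; ring
  set M := (min (prob P {ω | ω.2.1 = true}) (min
        (prob P {ω | ω.1 = false})
        (min
          (prob P {ω | ω.2.2 = true ∧ Yobs ω = true} +
            prob P {ω | ω.2.2 = false ∧ Yobs ω = false})
          (prob P {ω | ω.2.1 = true} - prob P {ω | ω.1 = true} +
            prob P {ω | ω.2.2 = true ∧ Yobs ω = false} +
            prob P {ω | ω.2.2 = false ∧ Yobs ω = true})))) with hM
  -- upper bound
  have hub : ∀ Q ∈ binFeasible P, prob Q {ω | ω.2.1 = true ∧ ω.1 = false} ≤ M := by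
    rintro Q ⟨hQ0, hQ1, hm1, hm0, hobs⟩
    simp only [Fintype.sum_prod_type, Fintype.sum_bool] at hQ1
    have f1 : prob Q {ω | ω.2.1 = true} =
        Q (false,true,false) + Q (false,true,true) + Q (true,true,false) + Q (true,true,true) := by
      simp [prob, Set.indicator_apply, Fintype.sum_prod_type, Fintype.sum_bool]; ring
    have f3 : prob Q {ω | ω.1 = true} =
        Q (true,false,false) + Q (true,false,true) + Q (true,true,false) + Q (true,true,true) := by
      simp [prob, Set.indicator_apply, Fintype.sum_prod_type, Fintype.sum_bool]; ring
    have f4 : prob Q {ω | ω.2.2 = true ∧ Yobs ω = true} =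
        Q (false,true,true) + Q (true,true,true) := by
      simp [prob, Set.indicator_apply, Fintype.sum_prod_type, Fintype.sum_bool, Yobs]; ring
    have f5 : prob Q {ω | ω.2.2 = true ∧ Yobs ω = false} =
        Q (false,false,true) + Q (true,false,true) := by
      simp [prob, Set.indicator_apply, Fintype.sum_prod_type, Fintype.sum_bool, Yobs]; ring
    have f6 : prob Q {ω | ω.2.2 = false ∧ Yobs ω = true} =
        Q (true,false,false) + Q (true,true,false) := by
      simp [prob, Set.indicator_apply, Fintype.sum_prod_type, Fintype.sum_bool, Yobs]; ring
    have f7 : prob Q {ω | ω.2.2 = false ∧ Yobs ω = false} =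
        Q (false,false,false) + Q (false,true,false) := by
      simp [prob, Set.indicator_apply, Fintype.sum_prod_type, Fintype.sum_bool, Yobs]; ring
    have fobj : prob Q {ω | ω.2.1 = true ∧ ω.1 = false} =
        Q (false,true,false) + Q (false,true,true) := by
      simp [prob, Set.indicator_apply, Fintype.sum_prod_type, Fintype.sum_bool]; ring
    have h11 := hobs true true
    have h10 := hobs true false
    have h01 := hobs false true
    have h00 := hobs false false
    rw [hM]
    refine le_min ?_ (le_min ?_ (le_min ?_ ?_))
    · rw [fobj, ← hm1, f1]
      linarith [hQ0 (true,true,false), hQ0 (true,true,true)]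
    · rw [fobj, e2]
      have h3 := hm0; rw [f3, e3] at h3
      linarith [hQ0 (false,false,false), hQ0 (false,false,true)]
    · rw [fobj, ← h11, ← h00, f4, f7]
      linarith [hQ0 (true,true,true), hQ0 (false,false,false)]
    · rw [fobj, ← hm1, ← hm0, ← h10, ← h01, f1, f3, f5, f6]
      linarith [hQ0 (false,false,true), hQ0 (true,true,false)]
  constructor
  · -- M is attained
    set q1 := min (P (false,true,true) + P (true,true,true))
        (P (false,false,true) + P (false,true,true)) with hq1
    set q0 := min (P (false,false,false) + P (false,true,false))
        (P (false,true,false) + P (true,true,false)) with hq0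
    have hq1nn : (0:ℝ) ≤ q1 := le_min (by linarith [hP0 (false,true,true), hP0 (true,true,true)])
      (by linarith [hP0 (false,false,true), hP0 (false,true,true)])
    have hq1le1 : q1 ≤ P (false,true,true) + P (true,true,true) := min_le_left _ _
    have hq1le2 : q1 ≤ P (false,false,true) + P (false,true,true) := min_le_right _ _
    have hq1ge : P (false,true,true) ≤ q1 := le_min (by linarith [hP0 (true,true,true)])
      (by linarith [hP0 (false,false,true)])
    have hq0nn : (0:ℝ) ≤ q0 := le_min (by linarith [hP0 (false,false,false), hP0 (false,true,false)])
      (by linarith [hP0 (false,true,false), hP0 (true,true,false)])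
    have hq0le1 : q0 ≤ P (false,false,false) + P (false,true,false) := min_le_left _ _
    have hq0le2 : q0 ≤ P (false,true,false) + P (true,true,false) := min_le_right _ _
    have hq0ge : P (false,true,false) ≤ q0 := le_min (by linarith [hP0 (false,false,false)])
      (by linarith [hP0 (true,true,false)])
    classical
    set Q : BOmega → ℝ := fun ω =>
      match ω with
      | (false,true,true) => q1
      | (true,true,true) => P (false,true,true) + P (true,true,true) - q1
      | (true,false,true) => q1 - P (false,true,true) + P (true,false,true)
      | (false,false,true) => P (false,false,true) + P (false,true,true) - q1
      | (false,true,false) => q0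
      | (false,false,false) => P (false,false,false) + P (false,true,false) - q0
      | (true,true,false) => P (false,true,false) + P (true,true,false) - q0
      | (true,false,false) => P (true,false,false) - P (false,true,false) + q0
      with hQdef
    have hQfeas : Q ∈ binFeasible P := by
      refine ⟨?_, ?_, ?_, ?_, ?_⟩
      · rintro ⟨y0, y1, x⟩
        cases y0 <;> cases y1 <;> cases x <;> simp only [hQdef] <;>
          linarith [hP0 (true,false,true), hP0 (true,false,false), hq1ge, hq0ge, hq1le1,
            hq1le2, hq0le1, hq0le2, hq1nn, hq0nn]
      · simp only [Fintype.sum_prod_type, Fintype.sum_bool, hQdef]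
        linarith
      · rw [e1]
        have : prob Q {ω | ω.2.1 = true} =
            Q (false,true,false) + Q (false,true,true) + Q (true,true,false) + Q (true,true,true) := by
          simp [prob, Set.indicator_apply, Fintype.sum_prod_type, Fintype.sum_bool]; ring
        rw [this]; simp only [hQdef]; ring
      · rw [e3]
        have : prob Q {ω | ω.1 = true} =
            Q (true,false,false) + Q (true,false,true) + Q (true,true,false) + Q (true,true,true) := by
          simp [prob, Set.indicator_apply, Fintype.sum_prod_type, Fintype.sum_bool]; ring
        rw [this]; simp only [hQdef]; ring
      · intro a b
        have g4 : prob Q {ω | ω.2.2 = true ∧ Yobs ω = true} =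
            Q (false,true,true) + Q (true,true,true) := by
          simp [prob, Set.indicator_apply, Fintype.sum_prod_type, Fintype.sum_bool, Yobs]; ring
        have g5 : prob Q {ω | ω.2.2 = true ∧ Yobs ω = false} =
            Q (false,false,true) + Q (true,false,true) := by
          simp [prob, Set.indicator_apply, Fintype.sum_prod_type, Fintype.sum_bool, Yobs]; ring
        have g6 : prob Q {ω | ω.2.2 = false ∧ Yobs ω = true} =
            Q (true,false,false) + Q (true,true,false) := by
          simp [prob, Set.indicator_apply, Fintype.sum_prod_type, Fintype.sum_bool, Yobs]; ring
        have g7 : prob Q {ω | ω.2.2 = false ∧ Yobs ω = false} =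
            Q (false,false,false) + Q (false,true,false) := by
          simp [prob, Set.indicator_apply, Fintype.sum_prod_type, Fintype.sum_bool, Yobs]; ring
        cases a <;> cases b
        · rw [g7, e7]; simp only [hQdef]; ring
        · rw [g6, e6]; simp only [hQdef]; ring
        · rw [g5, e5]; simp only [hQdef]; ring
        · rw [g4, e4]; simp only [hQdef]; ring
    refine ⟨Q, hQfeas, ?_⟩
    show prob Q {ω | ω.2.1 = true ∧ ω.1 = false} = M
    have hobjQ : prob Q {ω | ω.2.1 = true ∧ ω.1 = false} = q1 + q0 := by
      have : prob Q {ω | ω.2.1 = true ∧ ω.1 = false} =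
          Q (false,true,false) + Q (false,true,true) := by
        simp [prob, Set.indicator_apply, Fintype.sum_prod_type, Fintype.sum_bool]; ring
      rw [this]; simp only [hQdef]; ring
    have hle := hub Q hQfeas
    rw [hobjQ] at hle ⊢
    refine le_antisymm hle ?_
    have hM1 : M ≤ prob P {ω | ω.2.1 = true} := min_le_left _ _
    have hM2 : M ≤ prob P {ω | ω.1 = false} := le_trans (min_le_right _ _) (min_le_left _ _)
    have hM3 : M ≤ prob P {ω | ω.2.2 = true ∧ Yobs ω = true} +
        prob P {ω | ω.2.2 = false ∧ Yobs ω = false} :=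
      le_trans (min_le_right _ _) (le_trans (min_le_right _ _) (min_le_left _ _))
    have hM4 : M ≤ prob P {ω | ω.2.1 = true} - prob P {ω | ω.1 = true} +
        prob P {ω | ω.2.2 = true ∧ Yobs ω = false} +
        prob P {ω | ω.2.2 = false ∧ Yobs ω = true} :=
      le_trans (min_le_right _ _) (le_trans (min_le_right _ _) (min_le_right _ _))
    rw [e1] at hM1; rw [e2] at hM2; rw [e4, e7] at hM3; rw [e1, e3, e5, e6] at hM4
    rcases min_cases (P (false,true,true) + P (true,true,true))
        (P (false,false,true) + P (false,true,true)) with ⟨h1, h1'⟩ | ⟨h1, h1'⟩ <;>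
      rcases min_cases (P (false,false,false) + P (false,true,false))
        (P (false,true,false) + P (true,true,false)) with ⟨h0, h0'⟩ | ⟨h0, h0'⟩ <;>
      rw [hq1, hq0, h1, h0] <;> linarith
  · rintro v ⟨Q, hQ, rfl⟩
    exact hub Q hQ
end
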